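/- arXiv:1603.07520 — 2 statements merged into one kernel-verified Lean document; each statement's English description precedes it below -/
import Mathlib

section
/- For every h > 0, the exterior Abelian integral I₂ is differentiable at h and its derivative satisfies I₂'(h) = (5·I₂(h) − I₀(h)) / (4h + 1). -/
open MeasureTheory

/-- Endpoint `a(h) = √(1 + √(1+4h))` of the exterior oval of the Duffing Hamiltonian
`H(x,y) = y²/2 − x²/2 + x⁴/4`. -/
noncomputable def aext (h : ℝ) : ℝ := Real.sqrt (1 + Real.sqrt (1 + 4*h))

/-- The exterior Abelian integrals `I_i(h) = 2∫_{−a(h)}^{a(h)} xⁱ √(2h + x² − x⁴/2) dx`. -/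
noncomputable def Iext (i : ℕ) (h : ℝ) : ℝ :=
  2 * ∫ x in (-aext h)..aext h, x ^ i * Real.sqrt (2*h + x^2 - x^4/2)

noncomputable def gext (h t : ℝ) : ℝ := 2*h + (2*h + 1 + Real.sqrt (1 + 4*h)) * t^2

-- abstract pointwise identity
lemma polyId (s h t : ℝ) (hs2 : s^2 = 1+4*h) (hs0 : 0 < s) :
    t^2*(2+(2+2/s)*t^2)
      = 2*(1/((1+s)*s^2))*((1-4*t^2)*(2*h+(2*h+1+s)*t^2) + (2*h+1+s)*t^2*(1-t^2))
        + 2*((5/s^2-3/(s*(1+s)))*t^2 - 1/((1+s)*s^2))*(2*h+(2*h+1+s)*t^2) := by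
  have h4 : h = (s^2-1)/4 := by linarith
  subst h4
  have h1s : (1:ℝ)+s ≠ 0 := by positivity
  field_simp
  ring

lemma pt_abstract (t c cp al be w u : ℝ) (hu : u ≠ 0)
    (hpoly : t^2*(2+cp*t^2) = 2*be*((1-4*t^2)*u^2 + c*t^2*(1-t^2))
        + 2*(al*t^2-be)*u^2) :
    t^2*w*((2+cp*t^2)/(2*u))
      = be*((1-4*t^2)*w*u + c*t^2*(1-t^2)*w/u) + (al*(t^2*w*u) - be*(w*u)) := by
  field_simp
  linear_combination w * hpoly

lemma deriv_convert (be c t w u : ℝ) (hw : w ≠ 0) (hu : u ≠ 0)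
    (hww : w^2 = 1 - t^2) :
    be * ((1 - 3*t^2) * (w*u) + (t - t^3) * ((1/(2*w) * (-(2*t))) * u + w * (1/(2*u) * (c*(2*t)))))
      = be * ((1-4*t^2)*w*u + c*t^2*(1-t^2)*w/u) := by
  have h1 : t - t^3 = t * w^2 := by rw [hww]; ring
  rw [h1]
  field_simp
  linear_combination (be*t^2*c) * hww

noncomputable def Gext (i : ℕ) (h : ℝ) : ℝ :=
  ∫ t in (-1:ℝ)..1, t ^ i * Real.sqrt (1 - t^2) * Real.sqrt (gext h t)

lemma key (h : ℝ) (hh : 0 < h) :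
    (∫ t in (-1:ℝ)..1, t^2 * Real.sqrt (1-t^2) *
        ((2 + (2 + 2/Real.sqrt (1+4*h))*t^2) / (2*Real.sqrt (gext h t))))
    = (5/Real.sqrt (1+4*h)^2 - 3/(Real.sqrt (1+4*h)*(1+Real.sqrt (1+4*h)))) * Gext 2 h
      - (1/((1+Real.sqrt (1+4*h))*Real.sqrt (1+4*h)^2)) * Gext 0 h := by
  set s := Real.sqrt (1+4*h) with hsdef
  have hs2 : s^2 = 1+4*h := Real.sq_sqrt (by linarith)
  have hs1 : 1 ≤ s := by
    have h1 : Real.sqrt 1 ≤ Real.sqrt (1+4*h) := Real.sqrt_le_sqrt (by linarith)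
    rw [Real.sqrt_one] at h1
    rw [hsdef]; exact h1
  have hs0 : 0 < s := by linarith
  set c := 2*h + 1 + s with hcdef
  have hc0 : 0 < c := by linarith
  have hgc : ∀ t : ℝ, gext h t = 2*h + c*t^2 := fun t => by rw [gext, hcdef, hsdef]
  have hgpos : ∀ t : ℝ, 0 < gext h t := fun t => by
    rw [hgc]; nlinarith [sq_nonneg t]
  have hupos : ∀ t : ℝ, 0 < Real.sqrt (gext h t) := fun t => Real.sqrt_pos.2 (hgpos t)
  have hucont : Continuous fun t : ℝ => Real.sqrt (gext h t) := by
    apply Real.continuous_sqrt.comp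
    unfold gext; continuity
  have hwcont : Continuous fun t : ℝ => Real.sqrt (1 - t^2) := by
    apply Real.continuous_sqrt.comp; continuity
  set al := 5/s^2 - 3/(s*(1+s)) with haldef
  set be := (1/((1+s)*s^2) : ℝ) with hbedef
  set ψ : ℝ → ℝ := fun t => be * ((t - t^3) * (Real.sqrt (1-t^2) * Real.sqrt (gext h t)))
    with hψdef
  set ψd : ℝ → ℝ := fun t =>
      be * ((1-4*t^2)*Real.sqrt (1-t^2)*Real.sqrt (gext h t)
        + c*t^2*(1-t^2)*Real.sqrt (1-t^2)/Real.sqrt (gext h t)) with hψddef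
  have hψdcont : Continuous ψd := by
    rw [hψddef]
    apply Continuous.mul continuous_const
    apply Continuous.add
    · continuity
    · apply Continuous.div (by continuity) hucont
      exact fun t => ne_of_gt (hupos t)
  have hψcont : Continuous ψ := by
    rw [hψdef]
    apply Continuous.mul continuous_const
    exact (by continuity : Continuous fun t:ℝ => t - t^3).mul (hwcont.mul hucont)
  have hder : ∀ t ∈ Set.Ioo (-1:ℝ) 1, HasDerivWithinAt ψ (ψd t) (Set.Ioi t) t := by
    intro t ht
    obtain ⟨ht1, ht2⟩ := ht
    have hw2pos : 0 < 1 - t^2 := by nlinarith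
    have hwpos : 0 < Real.sqrt (1-t^2) := Real.sqrt_pos.2 hw2pos
    have hp : HasDerivAt (fun t : ℝ => t - t^3) (1 - 3*t^2) t := by
      simpa using (hasDerivAt_id' t).fun_sub (hasDerivAt_pow 3 t)
    have hw : HasDerivAt (fun t : ℝ => Real.sqrt (1-t^2))
        (1/(2*Real.sqrt (1-t^2)) * (-(2*t))) t := by
      have hinner : HasDerivAt (fun t : ℝ => 1 - t^2) (-(2*t)) t := by
        simpa using (hasDerivAt_pow 2 t).const_sub 1
      exact (Real.hasDerivAt_sqrt (ne_of_gt hw2pos)).comp t hinner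
    have hu : HasDerivAt (fun t : ℝ => Real.sqrt (gext h t))
        (1/(2*Real.sqrt (gext h t)) * (c*(2*t))) t := by
      have hinner : HasDerivAt (fun t : ℝ => gext h t) (c*(2*t)) t := by
        simp only [hgc]
        simpa using ((hasDerivAt_pow 2 t).const_mul c).const_add (2*h)
      exact (Real.hasDerivAt_sqrt (ne_of_gt (hgpos t))).comp t hinner
    have raw : HasDerivAt ψ
        (be * ((1 - 3*t^2) * (Real.sqrt (1-t^2) * Real.sqrt (gext h t))
          + (t - t^3) * ((1/(2*Real.sqrt (1-t^2)) * (-(2*t))) * Real.sqrt (gext h t)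
            + Real.sqrt (1-t^2) * (1/(2*Real.sqrt (gext h t)) * (c*(2*t)))))) t := by
      rw [hψdef]
      exact (hp.mul (hw.mul hu)).const_mul be
    have hval := deriv_convert be c t (Real.sqrt (1-t^2)) (Real.sqrt (gext h t))
      (ne_of_gt hwpos) (ne_of_gt (hupos t)) (Real.sq_sqrt hw2pos.le)
    simp only [hψddef]
    rw [← hval]
    exact raw.hasDerivWithinAt
  have hψ10 : ψ 1 - ψ (-1) = 0 := by rw [hψdef]; norm_num
  have hFTC : (∫ t in (-1:ℝ)..1, ψd t) = 0 := by
    rw [intervalIntegral.integral_eq_sub_of_hasDeriv_right_of_le (by norm_num : (-1:ℝ) ≤ 1)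
      hψcont.continuousOn hder (hψdcont.intervalIntegrable _ _), hψ10]
  have hpt : ∀ t : ℝ, t^2 * Real.sqrt (1-t^2) * ((2 + (2 + 2/s)*t^2) / (2*Real.sqrt (gext h t)))
      = ψd t + (al*(t^2*Real.sqrt (1-t^2)*Real.sqrt (gext h t))
        - be*(Real.sqrt (1-t^2)*Real.sqrt (gext h t))) := by
    intro t
    have hu2 : (Real.sqrt (gext h t))^2 = 2*h + c*t^2 := by
      rw [Real.sq_sqrt (hgpos t).le, hgc]
    have hpoly := polyId s h t hs2 hs0
    rw [← hcdef] at hpoly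
    have happ := pt_abstract t c (2+2/s) al be (Real.sqrt (1-t^2)) (Real.sqrt (gext h t))
      (ne_of_gt (hupos t)) (by rw [hu2]; linear_combination hpoly)
    simp only [hψddef]
    exact happ
  have hint2 : IntervalIntegrable (fun t : ℝ => t^2*Real.sqrt (1-t^2)*Real.sqrt (gext h t))
      volume (-1) 1 := (((continuous_pow 2).mul hwcont).mul hucont).intervalIntegrable _ _
  have hint0 : IntervalIntegrable (fun t : ℝ => Real.sqrt (1-t^2)*Real.sqrt (gext h t))
      volume (-1) 1 := (hwcont.mul hucont).intervalIntegrable _ _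
  have hG0 : Gext 0 h = ∫ t in (-1:ℝ)..1, Real.sqrt (1-t^2)*Real.sqrt (gext h t) := by
    simp only [Gext, pow_zero, one_mul]
  calc (∫ t in (-1:ℝ)..1, t^2 * Real.sqrt (1-t^2) *
        ((2 + (2 + 2/s)*t^2) / (2*Real.sqrt (gext h t))))
      = ∫ t in (-1:ℝ)..1, (ψd t + (al*(t^2*Real.sqrt (1-t^2)*Real.sqrt (gext h t))
        - be*(Real.sqrt (1-t^2)*Real.sqrt (gext h t)))) := by
        apply intervalIntegral.integral_congr
        intro t _; exact hpt t
    _ = (∫ t in (-1:ℝ)..1, ψd t)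
        + ((∫ t in (-1:ℝ)..1, al*(t^2*Real.sqrt (1-t^2)*Real.sqrt (gext h t)))
        - ∫ t in (-1:ℝ)..1, be*(Real.sqrt (1-t^2)*Real.sqrt (gext h t))) := by
        rw [intervalIntegral.integral_add (hψdcont.intervalIntegrable _ _)
          ((hint2.const_mul al).sub (hint0.const_mul be)),
          intervalIntegral.integral_sub (hint2.const_mul al) (hint0.const_mul be)]
    _ = al * Gext 2 h - be * Gext 0 h := by
        rw [hFTC, intervalIntegral.integral_const_mul, intervalIntegral.integral_const_mul,
          hG0, Gext]
        ring

lemma hasDerivAt_Gext2 (h : ℝ) (hh : 0 < h) :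
    HasDerivAt (Gext 2)
      (∫ t in (-1:ℝ)..1, t^2 * Real.sqrt (1-t^2) *
        ((2 + (2 + 2/Real.sqrt (1+4*h))*t^2) / (2*Real.sqrt (gext h t)))) h := by
  set F' : ℝ → ℝ → ℝ := fun x t => t^2 * Real.sqrt (1-t^2) *
      ((2 + (2 + 2/Real.sqrt (1+4*x))*t^2) / (2*Real.sqrt (gext x t))) with hF'def
  have hgpos : ∀ x : ℝ, 0 < x → ∀ t : ℝ, 0 < gext x t := by
    intro x hx t
    rw [gext]
    nlinarith [sq_nonneg t, Real.sqrt_nonneg (1+4*x)]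
  have hucont : ∀ x : ℝ, Continuous fun t : ℝ => Real.sqrt (gext x t) := by
    intro x
    apply Real.continuous_sqrt.comp
    unfold gext; continuity
  have hwcont : Continuous fun t : ℝ => Real.sqrt (1 - t^2) := by
    apply Real.continuous_sqrt.comp; continuity
  have hFcont : ∀ x : ℝ, Continuous fun t : ℝ => t^2 * Real.sqrt (1-t^2) * Real.sqrt (gext x t) :=
    fun x => ((continuous_pow 2).mul hwcont).mul (hucont x)
  have hball : ∀ x ∈ Metric.ball h (h/2), h/2 < x := by
    intro x hx
    rw [Metric.mem_ball, Real.dist_eq, abs_lt] at hx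
    linarith [hx.1]
  have key := intervalIntegral.hasDerivAt_integral_of_dominated_loc_of_deriv_le
    (F := fun x => fun t : ℝ => t^2 * Real.sqrt (1-t^2) * Real.sqrt (gext x t))
    (F' := F') (x₀ := h) (a := -1) (b := 1) (bound := fun _ => 3/Real.sqrt h)
    (μ := volume)
    (Metric.ball_mem_nhds h (half_pos hh))
    (Filter.Eventually.of_forall fun x => (hFcont x).aestronglyMeasurable)
    ((hFcont h).intervalIntegrable _ _)
    ?meas ?bnd (intervalIntegrable_const) ?diff
  · exact key.2
  case meas =>
    apply Continuous.aestronglyMeasurable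
    rw [hF'def]
    apply Continuous.mul ((continuous_pow 2).mul hwcont)
    apply Continuous.div (by continuity)
    · exact (continuous_const.mul (hucont h))
    · intro t
      have := hgpos h hh t
      have := Real.sqrt_pos.2 this
      positivity
  case bnd =>
    apply Filter.Eventually.of_forall
    intro t ht x hx
    have hx2 : h/2 < x := hball x hx
    have hxpos : 0 < x := by linarith
    have ht' : t ∈ Set.Ioc (-1:ℝ) 1 := by
      rwa [Set.uIoc_of_le (by norm_num : (-1:ℝ) ≤ 1)] at ht
    have ht2 : t^2 ≤ 1 := by
      rcases ht' with ⟨h1, h2⟩; nlinarith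
    have hw1 : Real.sqrt (1-t^2) ≤ 1 := Real.sqrt_le_one.2 (by nlinarith [sq_nonneg t])
    have hwnn : 0 ≤ Real.sqrt (1-t^2) := Real.sqrt_nonneg _
    have hs1 : 1 ≤ Real.sqrt (1+4*x) := by
      have h1 : Real.sqrt 1 ≤ Real.sqrt (1+4*x) := Real.sqrt_le_sqrt (by linarith)
      rwa [Real.sqrt_one] at h1
    have hdivle : 2/Real.sqrt (1+4*x) ≤ 2 := by
      rw [div_le_iff₀ (by linarith)]; nlinarith
    have hdivnn : 0 ≤ 2/Real.sqrt (1+4*x) := by positivity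
    have hnum : 2 + (2 + 2/Real.sqrt (1+4*x))*t^2 ≤ 6 := by nlinarith
    have hnumnn : 0 ≤ 2 + (2 + 2/Real.sqrt (1+4*x))*t^2 := by nlinarith [sq_nonneg t]
    have hg_ge : Real.sqrt h ≤ Real.sqrt (gext x t) := by
      apply Real.sqrt_le_sqrt
      rw [gext]
      nlinarith [sq_nonneg t, Real.sqrt_nonneg (1+4*x)]
    have hshpos : 0 < Real.sqrt h := Real.sqrt_pos.2 hh
    have hF'nn : 0 ≤ F' x t := by
      rw [hF'def]
      have := Real.sqrt_nonneg (gext x t)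
      positivity
    rw [Real.norm_eq_abs, abs_of_nonneg hF'nn, hF'def]
    simp only
    have hfrac : (2 + (2 + 2/Real.sqrt (1+4*x))*t^2) / (2*Real.sqrt (gext x t))
        ≤ 6 / (2*Real.sqrt h) :=
      div_le_div₀ (by norm_num) hnum (by linarith) (by linarith)
    calc t^2 * Real.sqrt (1-t^2) * ((2 + (2 + 2/Real.sqrt (1+4*x))*t^2) / (2*Real.sqrt (gext x t)))
        ≤ 1 * 1 * (6/(2*Real.sqrt h)) := by
          apply mul_le_mul _ hfrac (by positivity) (by norm_num)
          nlinarith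
      _ = 3/Real.sqrt h := by
          rw [one_mul, one_mul]
          ring
  case diff =>
    apply Filter.Eventually.of_forall
    intro t ht x hx
    have hx2 : h/2 < x := hball x hx
    have hxpos : 0 < x := by linarith
    have h14 : (0:ℝ) < 1 + 4*x := by linarith
    have hgx : 0 < gext x t := hgpos x hxpos t
    have dsq : HasDerivAt (fun x : ℝ => Real.sqrt (1+4*x)) (1/(2*Real.sqrt (1+4*x)) * 4) x := by
      have hinner : HasDerivAt (fun x : ℝ => 1 + 4*x) 4 x := by
        simpa using ((hasDerivAt_id x).const_mul 4).const_add 1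
      exact (Real.hasDerivAt_sqrt (ne_of_gt h14)).comp x hinner
    have d1 : HasDerivAt (fun x : ℝ => 2*x) 2 x := by
      simpa using (hasDerivAt_id x).const_mul 2
    have hginner : HasDerivAt (fun x : ℝ => gext x t)
        (2 + (2 + 1/(2*Real.sqrt (1+4*x)) * 4) * t^2) x := by
      unfold gext
      exact d1.add (((d1.add_const 1).add dsq).mul_const (t^2))
    have hsq : HasDerivAt (fun x : ℝ => Real.sqrt (gext x t))
        (1/(2*Real.sqrt (gext x t)) * (2 + (2 + 1/(2*Real.sqrt (1+4*x)) * 4) * t^2)) x :=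
      (Real.hasDerivAt_sqrt (ne_of_gt hgx)).comp x hginner
    have raw := hsq.const_mul (t^2 * Real.sqrt (1-t^2))
    have hval : t^2 * Real.sqrt (1-t^2)
          * (1/(2*Real.sqrt (gext x t)) * (2 + (2 + 1/(2*Real.sqrt (1+4*x)) * 4) * t^2))
        = F' x t := by
      rw [hF'def]
      simp only
      have hsx : Real.sqrt (1+4*x) ≠ 0 := by positivity
      have hgg : Real.sqrt (gext x t) ≠ 0 := ne_of_gt (Real.sqrt_pos.2 hgx)
      field_simp
      ring
    rw [← hval]
    exact raw

lemma sq_sqrt14 (h : ℝ) (hh : 0 < h) : Real.sqrt (1 + 4*h) ^ 2 = 1 + 4*h := by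
  rw [Real.sq_sqrt]; linarith

lemma sq_aext (h : ℝ) (hh : 0 < h) : aext h ^ 2 = 1 + Real.sqrt (1 + 4*h) := by
  rw [aext, Real.sq_sqrt]
  have := Real.sqrt_nonneg (1 + 4*h); linarith

lemma aext_pos (h : ℝ) (hh : 0 < h) : 0 < aext h := by
  apply Real.sqrt_pos.2
  have := Real.sqrt_nonneg (1 + 4*h); linarith

lemma Iext_sub (i : ℕ) (h : ℝ) (hh : 0 < h) :
    Iext i h = 2 * aext h ^ (i+1) * Gext i h := by
  set s := Real.sqrt (1 + 4*h) with hsdef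
  have hs2 : s^2 = 1 + 4*h := sq_sqrt14 h hh
  have ha2 : aext h ^ 2 = 1 + s := sq_aext h hh
  set a := aext h with hadef
  have h1 : (a : ℝ) • ∫ t in (-1:ℝ)..1, (fun x => x ^ i * Real.sqrt (2*h + x^2 - x^4/2)) (a*t)
      = ∫ x in (-a)..a, x ^ i * Real.sqrt (2*h + x^2 - x^4/2) := by
    have := intervalIntegral.smul_integral_comp_mul_left
      (fun x => x ^ i * Real.sqrt (2*h + x^2 - x^4/2)) a (a := -1) (b := 1)
    simpa using this
  have h2 : ∫ t in (-1:ℝ)..1, (fun x => x ^ i * Real.sqrt (2*h + x^2 - x^4/2)) (a*t)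
      = a^i * ∫ t in (-1:ℝ)..1, t ^ i * Real.sqrt (1 - t^2) * Real.sqrt (gext h t) := by
    rw [← intervalIntegral.integral_const_mul]
    apply intervalIntegral.integral_congr
    intro t ht
    rw [Set.uIcc_of_le (by norm_num : (-1:ℝ) ≤ 1), Set.mem_Icc] at ht
    have ht2 : (0:ℝ) ≤ 1 - t^2 := by nlinarith [ht.1, ht.2]
    have hfact : 2*h + (a*t)^2 - (a*t)^4/2 = (1 - t^2) * (gext h t) := by
      simp only [gext, ← hsdef]
      linear_combination (t^2 - t^4*(aext h^2 + 1 + s)/2) * ha2 - (t^4/2) * hs2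
    simp only
    rw [mul_pow, hfact, Real.sqrt_mul ht2]
    ring
  rw [Iext, ← h1, h2, Gext, smul_eq_mul]
  ring


lemma hasDerivAt_aext_cube (h : ℝ) (hh : 0 < h) :
    HasDerivAt (fun x => aext x ^ 3) (3 * aext h / Real.sqrt (1+4*h)) h := by
  have h14 : (0:ℝ) < 1 + 4*h := by linarith
  have hspos : 0 < Real.sqrt (1+4*h) := Real.sqrt_pos.2 h14
  have h1s : (0:ℝ) < 1 + Real.sqrt (1+4*h) := by linarith
  have hapos : 0 < aext h := aext_pos h hh
  have dsq : HasDerivAt (fun x : ℝ => Real.sqrt (1+4*x)) (1/(2*Real.sqrt (1+4*h)) * 4) h := by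
    have hinner : HasDerivAt (fun x : ℝ => 1 + 4*x) 4 h := by
      simpa using ((hasDerivAt_id h).const_mul 4).const_add 1
    exact (Real.hasDerivAt_sqrt (ne_of_gt h14)).comp h hinner
  have da : HasDerivAt aext
      (1/(2*Real.sqrt (1 + Real.sqrt (1+4*h))) * (1/(2*Real.sqrt (1+4*h)) * 4)) h := by
    unfold aext
    exact (Real.hasDerivAt_sqrt (ne_of_gt h1s)).comp h (dsq.const_add 1)
  have hcube := da.pow 3
  convert hcube using 1
  rfl
  rfl
  rfl
  have haa : Real.sqrt (1 + Real.sqrt (1+4*h)) = aext h := rfl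
  rw [haa]
  field_simp
  ring

theorem deriv_I2_exterior (h : ℝ) (hh : 0 < h) :
    HasDerivAt (Iext 2) ((5 * Iext 2 h - Iext 0 h) / (4*h + 1)) h := by
  have hGd := hasDerivAt_Gext2 h hh
  have hA := hasDerivAt_aext_cube h hh
  have hmul := (hA.mul hGd).const_mul 2
  have hev : Iext 2 =ᶠ[nhds h] fun x => 2 * (aext x ^ 3 * Gext 2 x) := by
    filter_upwards [eventually_gt_nhds hh] with x hx
    rw [Iext_sub 2 x hx]
    norm_num
    ring
  have H := hmul.congr_of_eventuallyEq hev
  convert H using 1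
  rfl
  rfl
  rw [key h hh, Iext_sub 2 h hh, Iext_sub 0 h hh]
  set s := Real.sqrt (1+4*h) with hsdef
  have hs2 : s^2 = 1+4*h := Real.sq_sqrt (by linarith)
  have hs0 : 0 < s := Real.sqrt_pos.2 (by linarith)
  have ha2 : aext h ^ 2 = 1 + s := sq_aext h hh
  have ha0 : 0 < aext h := aext_pos h hh
  rw [← ha2, show 4*h+1 = s^2 by linarith]
  have hane : aext h ≠ 0 := ne_of_gt ha0
  have hsne : s ≠ 0 := ne_of_gt hs0
  field_simp
  ring
end

section
/- For every h > 0, the exterior Abelian integral I₆ is differentiable at h and its derivative satisfies I₆'(h) = (4h+1)⁻¹·[ (4/3)(4h+1)·I₂(h) + (4/3)·h·(5·I₂(h) − I₀(h)) + (4/3)·(4h·I₀(h) + 5·I₂(h)) ] (equivalently I₆'(h) = (4h·I₀(h) + (12h+8)·I₂(h))/(4h+1)). -/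
open MeasureTheory

noncomputable def uu (t : ℝ) : ℝ := Real.sqrt (1 - t^2)
noncomputable def vv (s t : ℝ) : ℝ := Real.sqrt (s*(1+t^2)/2 - 1)
noncomputable def GG (i : ℕ) (s : ℝ) : ℝ := ∫ t in (-1:ℝ)..1, t^i * (uu t * vv s t)
noncomputable def KK (i : ℕ) (s : ℝ) : ℝ := ∫ t in (-1:ℝ)..1, t^i * (uu t / vv s t)

lemma W_pos {s : ℝ} (hs : 2 < s) (t : ℝ) : 0 < s*(1+t^2)/2 - 1 := by nlinarith [sq_nonneg t]
lemma cont_uu : Continuous uu := (continuous_const.sub (continuous_pow 2)).sqrt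
lemma cont_vv (s : ℝ) : Continuous (vv s) := by unfold vv; fun_prop
lemma vv_pos {s : ℝ} (hs : 2 < s) (t : ℝ) : 0 < vv s t := Real.sqrt_pos.2 (W_pos hs t)
lemma vv_sq {s : ℝ} (hs : 2 < s) (t : ℝ) : vv s t ^ 2 = s*(1+t^2)/2 - 1 :=
  Real.sq_sqrt (W_pos hs t).le
lemma cont_G (i : ℕ) (s : ℝ) : Continuous fun t => t ^ i * (uu t * vv s t) :=
  (continuous_pow i).mul (cont_uu.mul (cont_vv s))
lemma cont_K (i : ℕ) {s : ℝ} (hs : 2 < s) : Continuous fun t => t ^ i * (uu t / vv s t) :=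
  (continuous_pow i).mul (cont_uu.div (cont_vv s) fun t => (vv_pos hs t).ne')
lemma intG (i : ℕ) (s a b : ℝ) : IntervalIntegrable (fun t => t ^ i * (uu t * vv s t)) volume a b :=
  (cont_G i s).intervalIntegrable a b
lemma intK (i : ℕ) {s : ℝ} (hs : 2 < s) (a b : ℝ) :
    IntervalIntegrable (fun t => t ^ i * (uu t / vv s t)) volume a b :=
  (cont_K i hs).intervalIntegrable a b

lemma hasDerivAt_uu {t : ℝ} (h1 : (0:ℝ) < 1 - t^2) :
    HasDerivAt uu (-t / uu t) t := by
  have hin : HasDerivAt (fun t : ℝ => 1 - t^2) (-2*t) t := by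
    have := (hasDerivAt_pow 2 t).const_sub 1
    convert this using 1; rfl; rfl; push_cast; ring
  have h2 := (Real.hasDerivAt_sqrt h1.ne').comp t hin
  simp only [Function.comp_def] at h2
  unfold uu
  convert h2 using 1; rfl; rfl
  have : Real.sqrt (1 - t^2) > 0 := Real.sqrt_pos.2 h1
  field_simp

lemma hasDerivAt_u3 {t : ℝ} (ht : t ∈ Set.Ioo (-1:ℝ) 1) :
    HasDerivAt (fun t => (1 - t^2) * uu t) (-3 * t * uu t) t := by
  have h1 : (0:ℝ) < 1 - t^2 := by nlinarith [ht.1, ht.2]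
  have hu : uu t ≠ 0 := (Real.sqrt_pos.2 h1).ne'
  have hin : HasDerivAt (fun t : ℝ => 1 - t^2) (-2*t) t := by
    have := (hasDerivAt_pow 2 t).const_sub 1
    convert this using 1; rfl; rfl; push_cast; ring
  have := hin.mul (hasDerivAt_uu h1)
  convert this using 1; rfl; rfl; rfl
  have hu2 : uu t * uu t = 1 - t^2 := Real.mul_self_sqrt h1.le
  field_simp
  linear_combination (-t) * hu2

lemma hasDerivAt_vv {s : ℝ} (hs : 2 < s) (t : ℝ) :
    HasDerivAt (fun t => vv s t) (s * t / (2 * vv s t)) t := by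
  have hin : HasDerivAt (fun t : ℝ => s*(1+t^2)/2 - 1) (s * t) t := by
    have := (((hasDerivAt_pow 2 t).const_add 1).const_mul s).div_const 2 |>.sub_const 1
    convert this using 1; rfl; rfl; push_cast; ring
  have h2 := (Real.hasDerivAt_sqrt (W_pos hs t).ne').comp t hin
  simp only [Function.comp_def] at h2
  unfold vv
  convert h2 using 1; rfl; rfl
  have := vv_pos hs t
  unfold vv at this
  field_simp

lemma split2 {f g : ℝ → ℝ} (hf : IntervalIntegrable f volume (-1) 1)
    (hg : IntervalIntegrable g volume (-1) 1) (a b : ℝ) :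
    ∫ t in (-1:ℝ)..1, (a * f t + b * g t)
      = a * (∫ t in (-1:ℝ)..1, f t) + b * ∫ t in (-1:ℝ)..1, g t := by
  rw [intervalIntegral.integral_add (hf.const_mul a) (hg.const_mul b),
    intervalIntegral.integral_const_mul, intervalIntegral.integral_const_mul]

lemma split3 {f g k : ℝ → ℝ} (hf : IntervalIntegrable f volume (-1) 1)
    (hg : IntervalIntegrable g volume (-1) 1) (hk : IntervalIntegrable k volume (-1) 1)
    (a b c : ℝ) :
    ∫ t in (-1:ℝ)..1, (a * f t + b * g t + c * k t)
      = a * (∫ t in (-1:ℝ)..1, f t) + b * (∫ t in (-1:ℝ)..1, g t)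
        + c * ∫ t in (-1:ℝ)..1, k t := by
  rw [intervalIntegral.integral_add ((hf.const_mul a).add (hg.const_mul b)) (hk.const_mul c),
    split2 hf hg, intervalIntegral.integral_const_mul]

lemma split4 {f g k l : ℝ → ℝ} (hf : IntervalIntegrable f volume (-1) 1)
    (hg : IntervalIntegrable g volume (-1) 1) (hk : IntervalIntegrable k volume (-1) 1)
    (hl : IntervalIntegrable l volume (-1) 1) (a b c d : ℝ) :
    ∫ t in (-1:ℝ)..1, (a * f t + b * g t + c * k t + d * l t)
      = a * (∫ t in (-1:ℝ)..1, f t) + b * (∫ t in (-1:ℝ)..1, g t)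
        + c * (∫ t in (-1:ℝ)..1, k t) + d * ∫ t in (-1:ℝ)..1, l t := by
  rw [intervalIntegral.integral_add (((hf.const_mul a).add (hg.const_mul b)).add (hk.const_mul c))
    (hl.const_mul d), split3 hf hg hk, intervalIntegral.integral_const_mul]

/-- pointwise relation `G_i = (s/2-1) K_i + (s/2) K_{i+2}` -/
lemma relB (i : ℕ) {s : ℝ} (hs : 2 < s) :
    GG i s = (s/2-1) * KK i s + s/2 * KK (i+2) s := by
  unfold GG KK
  rw [← split2 (intK i hs (-1) 1) (intK (i+2) hs (-1) 1)]
  refine intervalIntegral.integral_congr fun t _ => ?_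
  have hv := (vv_pos hs t).ne'
  have hsq := vv_sq hs t
  field_simp
  linear_combination (2 * t^i * uu t) * hsq

/-- FTC relation from `F = (1-t²)·uu·(vv·t)` : `G₀ - 4G₂ + (s/2)(K₂ - K₄) = 0` -/
lemma relA {s : ℝ} (hs : 2 < s) :
    GG 0 s - 4 * GG 2 s + s/2 * (KK 2 s - KK 4 s) = 0 := by
  set F : ℝ → ℝ := fun t => (1 - t^2) * uu t * (vv s t * t) with hF
  have key : (∫ t in (-1:ℝ)..1, ((1:ℝ) * (t^0 * (uu t * vv s t)) + (-4) * (t^2 * (uu t * vv s t))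
      + (s/2) * (t^2 * (uu t / vv s t)) + (-(s/2)) * (t^4 * (uu t / vv s t))))
      = F 1 - F (-1) := by
    apply intervalIntegral.integral_eq_sub_of_hasDeriv_right_of_le (by norm_num)
    · exact (((continuous_const.sub (continuous_pow 2)).mul cont_uu).mul
        ((cont_vv s).mul continuous_id)).continuousOn
    · intro x hx
      apply HasDerivAt.hasDerivWithinAt
      have hd := (hasDerivAt_u3 hx).mul ((hasDerivAt_vv hs x).mul (hasDerivAt_id x))
      convert hd using 1; rfl; rfl
      have hv := (vv_pos hs x).ne'
      simp only [Pi.mul_apply, id]; field_simp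
      ring
    · exact (((intG 0 s (-1) 1).const_mul 1).add ((intG 2 s (-1) 1).const_mul (-4))).add
        ((intK 2 hs (-1) 1).const_mul (s/2)) |>.add ((intK 4 hs (-1) 1).const_mul (-(s/2)))
  rw [split4 (intG 0 s (-1) 1) (intG 2 s (-1) 1) (intK 2 hs (-1) 1) (intK 4 hs (-1) 1)] at key
  have hF1 : F 1 = 0 := by simp [hF]
  have hFm1 : F (-1) = 0 := by norm_num [hF]
  rw [hF1, hFm1] at key
  unfold GG KK
  linarith [key]

/-- FTC relation from `F = (1-t²)·uu·(W·vv·t)` : `(s/2-1)G₀ + 4G₂ - (7s/2)G₄ = 0` -/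
lemma relC {s : ℝ} (hs : 2 < s) :
    (s/2-1) * GG 0 s + 4 * GG 2 s - 7*s/2 * GG 4 s = 0 := by
  set F : ℝ → ℝ := fun t => (1 - t^2) * uu t * ((s*(1+t^2)/2 - 1) * vv s t * t) with hF
  have key : (∫ t in (-1:ℝ)..1, ((s/2-1) * (t^0 * (uu t * vv s t)) + (4:ℝ) * (t^2 * (uu t * vv s t))
      + (-(7*s/2)) * (t^4 * (uu t * vv s t)))) = F 1 - F (-1) := by
    apply intervalIntegral.integral_eq_sub_of_hasDeriv_right_of_le (by norm_num)
    · exact (((continuous_const.sub (continuous_pow 2)).mul cont_uu).mul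
        ((((continuous_const.mul (continuous_const.add (continuous_pow 2))).div_const 2).sub
          continuous_const).mul (cont_vv s) |>.mul continuous_id)).continuousOn
    · intro x hx
      apply HasDerivAt.hasDerivWithinAt
      have hWin : HasDerivAt (fun t : ℝ => s*(1+t^2)/2 - 1) (s * x) x := by
        have := (((hasDerivAt_pow 2 x).const_add 1).const_mul s).div_const 2 |>.sub_const 1
        convert this using 1; rfl; rfl; push_cast; ring
      have hd := (hasDerivAt_u3 hx).mul ((hWin.mul (hasDerivAt_vv hs x)).mul (hasDerivAt_id x))
      convert hd using 1; rfl; rfl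
      have hv := (vv_pos hs x).ne'
      have hsq := vv_sq hs x
      simp only [Pi.mul_apply, id]; field_simp
      linear_combination (2*s*uu x*x^2*(1-x^2)) * hsq
    · exact (((intG 0 s (-1) 1).const_mul _).add ((intG 2 s (-1) 1).const_mul 4)).add
        ((intG 4 s (-1) 1).const_mul _)
  rw [split3 (intG 0 s (-1) 1) (intG 2 s (-1) 1) (intG 4 s (-1) 1)] at key
  have hF1 : F 1 = 0 := by simp [hF]
  have hFm1 : F (-1) = 0 := by norm_num [hF]
  rw [hF1, hFm1] at key
  unfold GG
  linarith [key]

/-- FTC relation from `F = (1-t²)·uu·(W·vv·t³)` : `3(s/2-1)G₂ + 6G₄ - (9s/2)G₆ = 0` -/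
lemma relD {s : ℝ} (hs : 2 < s) :
    3*(s/2-1) * GG 2 s + 6 * GG 4 s - 9*s/2 * GG 6 s = 0 := by
  set F : ℝ → ℝ := fun t => (1 - t^2) * uu t * ((s*(1+t^2)/2 - 1) * vv s t * t^3) with hF
  have key : (∫ t in (-1:ℝ)..1, ((3*(s/2-1)) * (t^2 * (uu t * vv s t)) + (6:ℝ) * (t^4 * (uu t * vv s t))
      + (-(9*s/2)) * (t^6 * (uu t * vv s t)))) = F 1 - F (-1) := by
    apply intervalIntegral.integral_eq_sub_of_hasDeriv_right_of_le (by norm_num)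
    · exact (((continuous_const.sub (continuous_pow 2)).mul cont_uu).mul
        ((((continuous_const.mul (continuous_const.add (continuous_pow 2))).div_const 2).sub
          continuous_const).mul (cont_vv s) |>.mul (continuous_pow 3))).continuousOn
    · intro x hx
      apply HasDerivAt.hasDerivWithinAt
      have hWin : HasDerivAt (fun t : ℝ => s*(1+t^2)/2 - 1) (s * x) x := by
        have := (((hasDerivAt_pow 2 x).const_add 1).const_mul s).div_const 2 |>.sub_const 1
        convert this using 1; rfl; rfl; push_cast; ring
      have hd := (hasDerivAt_u3 hx).mul ((hWin.mul (hasDerivAt_vv hs x)).mul (hasDerivAt_pow 3 x))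
      convert hd using 1; rfl; rfl
      have hv := (vv_pos hs x).ne'
      have hsq := vv_sq hs x
      simp only [Pi.mul_apply, id]; field_simp
      linear_combination (2*s*uu x*x^4*(1-x^2)) * hsq
    · exact (((intG 2 s (-1) 1).const_mul _).add ((intG 4 s (-1) 1).const_mul 6)).add
        ((intG 6 s (-1) 1).const_mul _)
  rw [split3 (intG 2 s (-1) 1) (intG 4 s (-1) 1) (intG 6 s (-1) 1)] at key
  have hF1 : F 1 = 0 := by simp [hF]
  have hFm1 : F (-1) = 0 := by norm_num [hF]
  rw [hF1, hFm1] at key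
  unfold GG
  linarith [key]

lemma hasDerivAt_GG6 {s : ℝ} (hs : 2 < s) :
    HasDerivAt (GG 6) ((GG 6 s + KK 6 s) / (2*s)) s := by
  have hc0 : (0:ℝ) < 3*(s-2)/8 := by linarith
  set c : ℝ := Real.sqrt (3*(s-2)/8) with hc
  have hcpos : 0 < c := Real.sqrt_pos.2 hc0
  have hε : (0:ℝ) < (s-2)/4 := by linarith
  have hball : ∀ x ∈ Metric.ball s ((s-2)/4), 2 < x := by
    intro x hx
    rw [Metric.mem_ball, Real.dist_eq] at hx
    have := abs_lt.1 hx
    linarith [this.1]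
  have hWball : ∀ x ∈ Metric.ball s ((s-2)/4), ∀ t : ℝ, 3*(s-2)/8 ≤ x*(1+t^2)/2 - 1 := by
    intro x hx t
    rw [Metric.mem_ball, Real.dist_eq] at hx
    have h1 := (abs_lt.1 hx).1
    nlinarith [sq_nonneg t]
  have main := intervalIntegral.hasDerivAt_integral_of_dominated_loc_of_deriv_le
    (F := fun x t => t^6 * (uu t * vv x t))
    (F' := fun x t => t^6 * (uu t * ((1+t^2)/(4*vv x t))))
    (x₀ := s) (a := -1) (b := 1) (μ := volume)
    (bound := fun _ => (2*c)⁻¹) (Metric.ball_mem_nhds s hε)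
    (Filter.Eventually.of_forall fun x => (cont_G 6 x).aestronglyMeasurable)
    (intG 6 s (-1) 1)
    (((continuous_pow 6).mul (cont_uu.mul ((continuous_const.add (continuous_pow 2)).div
      ((continuous_const (y := (4:ℝ))).mul (cont_vv s)) fun t => by
        have := vv_pos hs t; exact (mul_pos (by norm_num) this).ne'))).aestronglyMeasurable)
    ?_ intervalIntegrable_const ?_
  · have h2 := main.2
    have hval : (∫ t in (-1:ℝ)..1, t^6 * (uu t * ((1+t^2)/(4*vv s t))))
        = (GG 6 s + KK 6 s) / (2*s) := by
      have hsplit := split2 (intG 6 s (-1) 1) (intK 6 hs (-1) 1) (1/(2*s)) (1/(2*s))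
      have hcongr : (∫ t in (-1:ℝ)..1, t^6 * (uu t * ((1+t^2)/(4*vv s t))))
          = ∫ t in (-1:ℝ)..1, (1/(2*s) * (t^6 * (uu t * vv s t)) + 1/(2*s) * (t^6 * (uu t / vv s t))) := by
        refine intervalIntegral.integral_congr fun t _ => ?_
        have hv := (vv_pos hs t).ne'
        have hsq := vv_sq hs t
        have hs0 : s ≠ 0 := by linarith
        field_simp
        linear_combination (-(4*t^6*uu t)) * hsq
      rw [hcongr, hsplit]
      unfold GG KK
      ring
    rw [hval] at h2
    exact h2
  · -- bound
    refine Filter.Eventually.of_forall fun t ht x hx => ?_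
    have h2x := hball x hx
    have hvx := vv_pos h2x t
    have ht' : t ∈ Set.Ioc (-1:ℝ) 1 := by
      simpa [Set.uIoc_of_le (by norm_num : (-1:ℝ) ≤ 1)] using ht
    have ht2 : t^2 ≤ 1 := by nlinarith [ht'.1, ht'.2]
    have h6 : t^6 ≤ 1 := by nlinarith [sq_nonneg t, sq_nonneg (t^2)]
    have huu1 : uu t ≤ 1 := Real.sqrt_le_one.mpr (by nlinarith [sq_nonneg t])
    have huu0 : 0 ≤ uu t := Real.sqrt_nonneg _
    have hcv : c ≤ vv x t := Real.sqrt_le_sqrt (hWball x hx t)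
    have hle : (1+t^2)/(4*vv x t) ≤ 2/(4*c) := by
      apply div_le_div₀ (by norm_num) (by linarith) (by positivity) (by linarith)
    have hnn : 0 ≤ uu t * ((1+t^2)/(4*vv x t)) :=
      mul_nonneg huu0 (div_nonneg (by positivity) (by linarith))
    rw [Real.norm_eq_abs, abs_of_nonneg (mul_nonneg (by positivity) hnn)]
    calc t^6 * (uu t * ((1+t^2)/(4*vv x t)))
        ≤ 1 * (1 * (2/(4*c))) := by
          apply mul_le_mul h6 (mul_le_mul huu1 hle (div_nonneg (by positivity) (by linarith))
            (by norm_num)) hnn (by norm_num)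
      _ = (2*c)⁻¹ := by field_simp; ring
  · -- differentiability in the parameter
    refine Filter.Eventually.of_forall fun t ht x hx => ?_
    have h2x := hball x hx
    have hW : 0 < x*(1+t^2)/2 - 1 := W_pos h2x t
    have hin : HasDerivAt (fun x : ℝ => x*(1+t^2)/2 - 1) ((1+t^2)/2) x := by
      have := ((hasDerivAt_id x).mul_const ((1+t^2):ℝ)).div_const 2 |>.sub_const 1
      convert this using 1; rfl; rfl; all_goals simp
    have hsq := (Real.hasDerivAt_sqrt hW.ne').comp x hin
    simp only [Function.comp_def] at hsq
    have := hsq.const_mul (t^6 * uu t)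
    convert this using 1; rfl
    · funext y; unfold vv; ring
    · have hvx := (vv_pos h2x t).ne'
      unfold vv at hvx ⊢
      field_simp
      ring

lemma Iext_eq (i : ℕ) {h : ℝ} (hh : 0 < h) :
    Iext i h = 2 * (Real.sqrt (1 + Real.sqrt (1+4*h)))^(i+2) * GG i (1 + Real.sqrt (1+4*h)) := by
  have h14 : (0:ℝ) < 1+4*h := by linarith
  unfold Iext aext
  set r := Real.sqrt (1+4*h) with hrdef
  set s := 1 + r with hsdef
  have hr2 : r^2 = 1+4*h := Real.sq_sqrt h14.le
  have hr1 : 1 < r := by rw [hrdef]; exact (Real.lt_sqrt (by norm_num)).mpr (by nlinarith)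
  have hs2 : 2 < s := by rw [hsdef]; linarith
  have hs0 : (0:ℝ) < s := by linarith
  set a := Real.sqrt s with hadef
  have ha0 : 0 < a := Real.sqrt_pos.2 hs0
  have ha2 : a^2 = s := Real.sq_sqrt hs0.le
  have hsub := intervalIntegral.smul_integral_comp_mul_left (a := -1) (b := 1)
    (f := fun x => x ^ i * Real.sqrt (2*h + x^2 - x^4/2)) a
  rw [mul_neg_one, mul_one] at hsub
  rw [← hsub]
  have hinner : (∫ t in (-1:ℝ)..1, (a*t)^i * Real.sqrt (2*h + (a*t)^2 - (a*t)^4/2))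
      = a^(i+1) * GG i s := by
    unfold GG
    rw [← intervalIntegral.integral_const_mul]
    refine intervalIntegral.integral_congr fun t ht => ?_
    have ht' : t ∈ Set.Icc (-1:ℝ) 1 := by
      simpa [Set.uIcc_of_le (by norm_num : (-1:ℝ) ≤ 1)] using ht
    have h1t : 0 ≤ 1 - t^2 := by nlinarith [ht'.1, ht'.2]
    have halg : 2*h + (a*t)^2 - (a*t)^4/2 = (s*(1-t^2)) * (s*(1+t^2)/2 - 1) := by
      linear_combination (t^2 - t^4/2*(a^2+s)) * ha2 + (-1/2:ℝ) * hr2 + (-(s-1+r)/2) * hsdef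
    rw [halg, Real.sqrt_mul (mul_nonneg hs0.le h1t), Real.sqrt_mul hs0.le]
    unfold uu vv
    rw [mul_pow, ← hadef]
    ring
  rw [hinner, smul_eq_mul]
  ring

theorem deriv_I6_exterior (h : ℝ) (hh : 0 < h) :
    HasDerivAt (Iext 6)
      ((4*h + 1)⁻¹ * ((4/3) * (4*h + 1) * Iext 2 h
        + (4/3) * h * (5 * Iext 2 h - Iext 0 h)
        + (4/3) * (4*h * Iext 0 h + 5 * Iext 2 h))) h := by
  have h14 : (0:ℝ) < 1+4*h := by linarith
  set r := Real.sqrt (1+4*h) with hrdef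
  set s := 1 + r with hsdef
  have hr2 : r^2 = 1+4*h := Real.sq_sqrt h14.le
  have hr1 : 1 < r := by rw [hrdef]; exact (Real.lt_sqrt (by norm_num)).mpr (by nlinarith)
  have hs2 : 2 < s := by rw [hsdef]; linarith
  have hs0 : (0:ℝ) < s := by linarith
  have hr0 : (0:ℝ) < r := by linarith
  -- derivative of the parameter map
  have hsder : HasDerivAt (fun y : ℝ => 1 + Real.sqrt (1+4*y)) (2/r) h := by
    have hin : HasDerivAt (fun y : ℝ => 1+4*y) 4 h := by
      simpa using ((hasDerivAt_id h).const_mul 4).const_add 1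
    have hq := (Real.hasDerivAt_sqrt h14.ne').comp h hin
    simp only [Function.comp_def] at hq
    have := hq.const_add 1
    convert this using 1; rfl; rfl
    rw [← hrdef]
    field_simp
    ring
  have hGder := (hasDerivAt_GG6 hs2).comp h hsder
  have hpow : HasDerivAt (fun y : ℝ => (1 + Real.sqrt (1+4*y))^4) (4*s^3*(2/r)) h := by
    have := hsder.pow 4
    convert this using 1; rfl; rfl; rfl; rw [hsdef, hrdef]; norm_num
  have hphi := (hpow.mul hGder).const_mul 2
  have heqev : Iext 6 =ᶠ[nhds h]
      fun y => 2*((1 + Real.sqrt (1+4*y))^4 * GG 6 (1 + Real.sqrt (1+4*y))) := by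
    refine Filter.eventuallyEq_of_mem (isOpen_Ioi.mem_nhds hh) fun y hy => ?_
    have hy' : (0:ℝ) < y := hy
    rw [Iext_eq 6 hy']
    have h0 : (0:ℝ) ≤ 1 + Real.sqrt (1+4*y) := by positivity
    rw [show (Real.sqrt (1 + Real.sqrt (1+4*y)))^(6+2)
        = ((Real.sqrt (1 + Real.sqrt (1+4*y)))^2)^4 by ring, Real.sq_sqrt h0]
    ring
  have hIder := hphi.congr_of_eventuallyEq heqev
  simp only [Function.comp_def] at hIder
  clear_value r s
  convert hIder using 1; rfl; rfl
  -- now pure algebra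
  rw [Iext_eq 0 hh, Iext_eq 2 hh, ← hrdef, ← hsdef]
  have hsq2 : (Real.sqrt s)^(0+2) = s := by
    norm_num; exact Real.sq_sqrt hs0.le
  have hsq4 : (Real.sqrt s)^(2+2) = s^2 := by
    rw [show (Real.sqrt s)^(2+2) = ((Real.sqrt s)^2)^2 by ring, Real.sq_sqrt hs0.le]
  rw [hsq2, hsq4]
  -- linear relations
  have hs1 : s - 1 ≠ 0 := by intro c; nlinarith
  have hsne : s ≠ 0 := hs0.ne'
  have e1 : (s-1)*KK 2 s = 5*GG 2 s - GG 0 s := by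
    linear_combination relA hs2 - relB 2 hs2
  have e2 : s*KK 4 s = 2*GG 2 s - (s-2)*KK 2 s := by
    linear_combination (-2:ℝ)*relB 2 hs2
  have e3 : 7*s*GG 4 s = (s-2)*GG 0 s + 8*GG 2 s := by
    linear_combination (-2:ℝ)*relC hs2
  have e4 : s*KK 6 s = 2*GG 4 s - (s-2)*KK 4 s := by
    linear_combination (-2:ℝ)*relB 4 hs2
  have e5 : 3*s*GG 6 s = (s-2)*GG 2 s + 4*GG 4 s := by
    linear_combination (-2/3:ℝ)*relD hs2
  have hG4 : GG 4 s = ((s-2)*GG 0 s + 8*GG 2 s)/(7*s) := by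
    rw [eq_div_iff (by positivity)]; linear_combination e3
  have hK2 : KK 2 s = (5*GG 2 s - GG 0 s)/(s-1) := by
    rw [eq_div_iff hs1]; linear_combination e1
  have hK4 : KK 4 s = (2*GG 2 s - (s-2)*KK 2 s)/s := by
    rw [eq_div_iff hsne]; linear_combination e2
  have hG6 : GG 6 s = ((s-2)*GG 2 s + 4*GG 4 s)/(3*s) := by
    rw [eq_div_iff (by positivity)]; linear_combination e5
  have hK6 : KK 6 s = (2*GG 4 s - (s-2)*KK 4 s)/s := by
    rw [eq_div_iff hsne]; linear_combination e4
  have hrs : r = s - 1 := by rw [hsdef]; ring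
  have hhs : h = (s^2-2*s)/4 := by
    have : 4*h = s^2 - 2*s := by
      linear_combination (-1:ℝ)*hr2 + (-(s-1+r))*hsdef
    linarith
  rw [hG6, hK6, hK4, hK2, hG4, hrs, hhs]
  rw [show (4*((s^2-2*s)/4)+1 : ℝ) = (s-1)^2 by ring]
  have hden : 4*((s^2-2*s)/4) + 1 ≠ 0 := by
    have : (0:ℝ) < 4*((s^2-2*s)/4) + 1 := by nlinarith
    exact this.ne'
  field_simp
  ring
end
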